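/- Let d ≥ 3, real p ≥ n > d/2, and ℓ ∈ {1,2,3,...}. The sharp constant K_{pn} in the inequality ‖P(v,w)‖_p ≤ (K_{pn}/2)(‖v‖_p‖w‖_{n+1} + ‖v‖_n‖w‖_{p+1}) for divergence-free mean-zero fields on T^d satisfies K_{pn} ≥ (√2/(2π)^{d/2}) · √(1 + (1+4ℓ²)^p) / ( ℓ^p (1+ℓ²)^{(n+1)/2} + ℓ^n (1+ℓ²)^{(p+1)/2} ). -/

import Mathlib

open scoped BigOperators
noncomputable section

/-- Euclidean norm of a lattice point of `ℤ^d`. -/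
def latNorm {d : ℕ} (k : Fin d → ℤ) : ℝ := Real.sqrt (∑ i, ((k i : ℝ)) ^ 2)

/-- Euclidean norm of a vector of `ℂ^d`. -/
def cNorm {d : ℕ} (a : Fin d → ℂ) : ℝ := Real.sqrt (∑ i, ‖a i‖ ^ 2)

/-- A divergence-free mean-zero vector field on the torus `T^d = (ℝ/2πℤ)^d` is represented
by the family of its Fourier coefficients `v_k ∈ ℂ^d`, `k ∈ ℤ^d`. -/
def Coeff (d : ℕ) := (Fin d → ℤ) → (Fin d → ℂ)

/-- Bilinear dot product `k · a` of a lattice vector with a vector of `ℂ^d`. -/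
def dotC {d : ℕ} (k : Fin d → ℤ) (a : Fin d → ℂ) : ℂ := ∑ i, (k i : ℂ) * a i

/-- The projection `Π_k` of `ℂ^d` onto `k^⊥`: `Π_k c = c - ((k·c)/|k|²) k` for `k ≠ 0`,
and `Π_0 c = c`. -/
def leray {d : ℕ} (k : Fin d → ℤ) (a : Fin d → ℂ) : Fin d → ℂ :=
  if k = 0 then a else fun i => a i - dotC k a / (latNorm k : ℂ) ^ 2 * (k i : ℂ)

/-- The Sobolev norm of order `m`: `‖v‖_m² = Σ_{k ≠ 0} |k|^{2m} |v_k|²`. -/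
def sobNorm {d : ℕ} (m : ℝ) (v : Coeff d) : ℝ :=
  Real.sqrt (∑' k : {k : Fin d → ℤ // k ≠ 0},
    latNorm (k : Fin d → ℤ) ^ (2 * m) * cNorm (v (k : Fin d → ℤ)) ^ 2)

/-- Membership in the Sobolev space `H^m` (finiteness of the norm). -/
def inHm {d : ℕ} (m : ℝ) (v : Coeff d) : Prop :=
  Summable (fun k : {k : Fin d → ℤ // k ≠ 0} =>
    latNorm (k : Fin d → ℤ) ^ (2 * m) * cNorm (v (k : Fin d → ℤ)) ^ 2)

/-- Divergence-free: `k · v_k = 0` for all `k`. -/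
def divFree {d : ℕ} (v : Coeff d) : Prop := ∀ k, dotC k (v k) = 0

/-- Mean zero: `v_0 = 0`. -/
def meanZero {d : ℕ} (v : Coeff d) : Prop := v 0 = 0

/-- Reality of the field: `v_{-k} = conj(v_k)`. -/
def realField {d : ℕ} (v : Coeff d) : Prop :=
  ∀ k i, v (-k) i = starRingEnd ℂ (v k i)

/-- The Fourier coefficients of the Leray-projected advection term `P(v,w) = Π(v·∂w)`:
`P(v,w)_k = (i/(2π)^{d/2}) Σ_h (v_h · (k-h)) Π_k w_{k-h}`. -/
def Pcoef {d : ℕ} (v w : Coeff d) : Coeff d := fun k i =>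
  Complex.I / ((2 * Real.pi : ℝ) ^ ((d : ℝ) / 2) : ℝ) *
    ∑' h : Fin d → ℤ, dotC (k - h) (v h) * leray k (w (k - h)) i

/-- `K` is an admissible constant for the tame inequality
`‖P(v,w)‖_p ≤ (K/2)(‖v‖_p ‖w‖_{n+1} + ‖v‖_n ‖w‖_{p+1})` over all divergence-free
mean-zero real fields `v ∈ H^p`, `w ∈ H^{p+1}`. -/
def tameIneq (d : ℕ) (p n K : ℝ) : Prop :=
  ∀ v w : Coeff d, divFree v → divFree w → meanZero v → meanZero w →
    realField v → realField w → inHm p v → inHm (p + 1) w →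
    sobNorm p (Pcoef v w) ≤
      K / 2 * (sobNorm p v * sobNorm (n + 1) w + sobNorm n v * sobNorm (p + 1) w)

/-!
The trial fields `i e₂ (e_A - e_{-A})` and `i e₃ (e_B - e_{-B})` with `A = ℓ e₁`, `B = ℓ e₁ + e₂` are
`pairField A (i e₂)` and `pairField B (i e₃)`. The advection term of two such single-mode fields again consists of
two single modes, at `A + B` and at `A - B`, with coefficients `(i/(2π)^{d/2}) (v_A · (±B)) Π_{A±B} w_{±B}`.
Since `e₃` is orthogonal to `A` and `B`, the Leray projection acts trivially on them, so every norm in the tame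
inequality is explicit, and the inequality for this pair rearranges to the lower bound on `K`.
-/

variable {d : ℕ}

lemma latNorm_nonneg (k : Fin d → ℤ) : 0 ≤ latNorm k := Real.sqrt_nonneg _

lemma latNorm_neg (k : Fin d → ℤ) : latNorm (-k) = latNorm k := by
  simp [latNorm]

lemma ne_zero_of_latNorm_ne_zero {k : Fin d → ℤ} (h : latNorm k ≠ 0) : k ≠ 0 := by
  rintro rfl
  simp [latNorm] at h

lemma latNorm_rpow_two_mul (k : Fin d → ℤ) (m : ℝ) : latNorm k ^ (2 * m) = (latNorm k ^ m) ^ 2 := by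
  rw [mul_comm, Real.rpow_mul (latNorm_nonneg k), Real.rpow_two]

lemma latNorm_single (i : Fin d) (x : ℤ) : latNorm (Pi.single i x) = |(x : ℝ)| := by
  rw [latNorm, Finset.sum_eq_single i (fun j _ hj => by simp [hj]) (by simp)]
  simp [Real.sqrt_sq_eq_abs]

lemma latNorm_single_add_single {i j : Fin d} (hij : i ≠ j) (x y : ℤ) :
    latNorm (Pi.single i x + Pi.single j y) = √((x : ℝ) ^ 2 + (y : ℝ) ^ 2) := by
  rw [latNorm, Fintype.sum_eq_add i j hij (fun k ⟨hki, hkj⟩ => by simp [hki, hkj])]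
  simp [hij, hij.symm]

lemma cNorm_nonneg (u : Fin d → ℂ) : 0 ≤ cNorm u := Real.sqrt_nonneg _

lemma cNorm_zero : cNorm (0 : Fin d → ℂ) = 0 := by
  simp [cNorm]

lemma cNorm_smul (z : ℂ) (u : Fin d → ℂ) : cNorm (z • u) = ‖z‖ * cNorm u := by
  simp [cNorm, mul_pow, ← Finset.mul_sum, Real.sqrt_mul (sq_nonneg _), Real.sqrt_sq (norm_nonneg z)]

lemma cNorm_star (u : Fin d → ℂ) : cNorm (star u) = cNorm u := by
  simp [cNorm]

lemma cNorm_single (j : Fin d) (z : ℂ) : cNorm (Pi.single j z) = ‖z‖ := by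
  rw [cNorm, Finset.sum_eq_single j (fun i _ hi => by simp [hi]) (by simp)]
  simp

lemma dotC_zero_right (k : Fin d → ℤ) : dotC k 0 = 0 := by
  simp [dotC]

lemma dotC_add_right (k : Fin d → ℤ) (u u' : Fin d → ℂ) :
    dotC k (u + u') = dotC k u + dotC k u' := by
  simp [dotC, mul_add, Finset.sum_add_distrib]

lemma dotC_add_left (k k' : Fin d → ℤ) (u : Fin d → ℂ) :
    dotC (k + k') u = dotC k u + dotC k' u := by
  simp [dotC, add_mul, Finset.sum_add_distrib]

lemma dotC_neg_left (k : Fin d → ℤ) (u : Fin d → ℂ) : dotC (-k) u = -dotC k u := by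
  simp [dotC]

lemma star_dotC (k : Fin d → ℤ) (u : Fin d → ℂ) : star (dotC k u) = dotC k (star u) := by
  simp [dotC]

lemma dotC_single (k : Fin d → ℤ) (j : Fin d) (z : ℂ) : dotC k (Pi.single j z) = k j * z := by
  rw [dotC, Finset.sum_eq_single j (fun i _ hi => by simp [hi]) (by simp)]
  simp

lemma leray_zero (k : Fin d → ℤ) : leray k 0 = 0 := by
  unfold leray
  split_ifs
  · rfl
  · funext i
    simp [dotC_zero_right]

lemma leray_add (k : Fin d → ℤ) (u u' : Fin d → ℂ) :
    leray k (u + u') = leray k u + leray k u' := by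
  unfold leray
  split_ifs
  · rfl
  · funext i
    simp only [dotC_add_right, Pi.add_apply]
    ring

lemma leray_of_dotC_eq_zero {k : Fin d → ℤ} {u : Fin d → ℂ} (h : dotC k u = 0) : leray k u = u := by
  unfold leray
  split_ifs
  · rfl
  · simp [h]

lemma leray_neg (k : Fin d → ℤ) (u : Fin d → ℂ) : leray (-k) u = leray k u := by
  unfold leray
  simp only [neg_eq_zero, dotC_neg_left, latNorm_neg, Pi.neg_apply, Int.cast_neg]
  split_ifs
  · rfl
  · funext i
    ring

lemma star_leray (k : Fin d → ℤ) (u : Fin d → ℂ) : star (leray k u) = leray k (star u) := by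
  unfold leray
  split_ifs
  · rfl
  · funext i
    simp [← star_dotC]

section Sobolev

variable {m : ℝ} {v w : Coeff d}

lemma sobNorm_nonneg (m : ℝ) (v : Coeff d) : 0 ≤ sobNorm m v := Real.sqrt_nonneg _

lemma sobNorm_sq (m : ℝ) (v : Coeff d) :
    sobNorm m v ^ 2 =
      ∑' k : {k : Fin d → ℤ // k ≠ 0}, latNorm (k : Fin d → ℤ) ^ (2 * m) * cNorm (v k) ^ 2 :=
  Real.sq_sqrt (tsum_nonneg fun _ =>
    mul_nonneg (Real.rpow_nonneg (latNorm_nonneg _) _) (sq_nonneg _))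

lemma inHm_of_forall_notMem {S : Finset (Fin d → ℤ)} (hv : ∀ k ∉ S, v k = 0) : inHm m v := by
  refine summable_of_ne_finset_zero (s := S.subtype (· ≠ 0)) fun k hk => ?_
  rw [hv k (by simpa using hk), cNorm_zero]
  ring

lemma sobNorm_add_sq (hv : inHm m v) (hw : inHm m w) (hvw : ∀ k, v k = 0 ∨ w k = 0) :
    sobNorm m (fun k => v k + w k) ^ 2 = sobNorm m v ^ 2 + sobNorm m w ^ 2 := by
  refine (sobNorm_sq m _).trans ?_
  rw [sobNorm_sq, sobNorm_sq, ← hv.tsum_add hw]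
  congr 1
  funext k
  rcases hvw k with h | h <;> simp [h, cNorm_zero]

lemma inHm_single (k₀ : Fin d → ℤ) (a : Fin d → ℂ) : inHm m (Pi.single k₀ a : Coeff d) :=
  inHm_of_forall_notMem (S := {k₀}) fun k hk => by simp_all

lemma sobNorm_single {k₀ : Fin d → ℤ} (hk₀ : k₀ ≠ 0) (a : Fin d → ℂ) :
    sobNorm m (Pi.single k₀ a : Coeff d) = latNorm k₀ ^ m * cNorm a := by
  unfold sobNorm
  rw [tsum_eq_single ⟨k₀, hk₀⟩ fun k hk => ?_]
  · rw [Pi.single_eq_same, latNorm_rpow_two_mul, ← mul_pow,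
      Real.sqrt_sq (mul_nonneg (Real.rpow_nonneg (latNorm_nonneg _) _) (cNorm_nonneg _))]
  · simp [Pi.single_eq_of_ne (fun h => hk (Subtype.ext h)), cNorm_zero]

end Sobolev

def pairField (k₀ : Fin d → ℤ) (a : Fin d → ℂ) : Coeff d :=
  fun k => (Pi.single k₀ a : Coeff d) k + (Pi.single (-k₀) (star a) : Coeff d) k

section PairField

variable {k₀ : Fin d → ℤ} {a : Fin d → ℂ} {m : ℝ}

lemma pairField_apply_of_ne {k : Fin d → ℤ} (h₁ : k ≠ k₀) (h₂ : k ≠ -k₀) :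
    pairField k₀ a k = 0 := by
  simp [pairField, h₁, h₂]

lemma pairField_disjoint {K K' : Fin d → ℤ} (h₁ : K ≠ K') (h₂ : K ≠ -K') (x y : Fin d → ℂ)
    (k : Fin d → ℤ) : pairField K x k = 0 ∨ pairField K' y k = 0 := by
  by_cases hk : k = K ∨ k = -K
  · right
    rcases hk with rfl | rfl
    · exact pairField_apply_of_ne h₁ h₂
    · exact pairField_apply_of_ne (by rwa [Ne, neg_eq_iff_eq_neg]) (by rwa [Ne, neg_inj])
  · push Not at hk
    exact Or.inl (pairField_apply_of_ne hk.1 hk.2)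

lemma pairField_neg_apply (k : Fin d → ℤ) : pairField k₀ a (-k) = star (pairField k₀ a k) := by
  simp only [pairField, Pi.single_apply, neg_eq_iff_eq_neg, neg_neg, star_add]
  split_ifs <;> simp [add_comm]

lemma divFree_pairField (h : dotC k₀ a = 0) : divFree (pairField k₀ a) := by
  intro k
  rw [pairField, dotC_add_right, Pi.apply_single dotC dotC_zero_right,
    Pi.apply_single dotC dotC_zero_right, h, dotC_neg_left, ← star_dotC, h]
  simp

lemma meanZero_pairField (hk₀ : k₀ ≠ 0) : meanZero (pairField k₀ a) :=
  pairField_apply_of_ne (Ne.symm hk₀) (by simpa [eq_comm] using hk₀)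

lemma realField_pairField : realField (pairField k₀ a) := fun k i => by
  rw [pairField_neg_apply]
  rfl

lemma inHm_pairField : inHm m (pairField k₀ a) :=
  inHm_of_forall_notMem (S := {k₀, -k₀}) fun k hk => by
    simp only [Finset.mem_insert, Finset.mem_singleton, not_or] at hk
    exact pairField_apply_of_ne hk.1 hk.2

lemma sobNorm_pairField (hk₀ : k₀ ≠ 0) :
    sobNorm m (pairField k₀ a) = √2 * (latNorm k₀ ^ m * cNorm a) := by
  have hdisj : ∀ k, (Pi.single k₀ a : Coeff d) k = 0 ∨
      (Pi.single (-k₀) (star a) : Coeff d) k = 0 := by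
    intro k
    by_cases hk : k = k₀
    · subst hk
      simp [mt self_eq_neg.mp hk₀]
    · simp [hk]
  have hsq : sobNorm m (pairField k₀ a) ^ 2 = 2 * (latNorm k₀ ^ m * cNorm a) ^ 2 := by
    refine (sobNorm_add_sq (inHm_single _ _) (inHm_single _ _) hdisj).trans ?_
    rw [sobNorm_single hk₀, sobNorm_single (neg_ne_zero.mpr hk₀), latNorm_neg, cNorm_star]
    ring
  rw [← Real.sqrt_sq (sobNorm_nonneg m (pairField k₀ a)), hsq, Real.sqrt_mul zero_le_two,
    Real.sqrt_sq (mul_nonneg (Real.rpow_nonneg (latNorm_nonneg _) _) (cNorm_nonneg _))]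

end PairField

def advConst (d : ℕ) : ℂ := Complex.I / ((2 * Real.pi : ℝ) ^ ((d : ℝ) / 2) : ℝ)

lemma star_advConst : star (advConst d) = -advConst d := by
  simp [advConst, Complex.conj_ofReal, neg_div]

lemma norm_advConst : ‖advConst d‖ = ((2 * Real.pi) ^ ((d : ℝ) / 2))⁻¹ := by
  rw [advConst, norm_div, Complex.norm_I, Complex.norm_real, Real.norm_eq_abs,
    abs_of_pos (by positivity), one_div]

lemma Pcoef_pairField_left (A : Fin d → ℤ) (a : Fin d → ℂ) (w : Coeff d) (k : Fin d → ℤ) :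
    Pcoef (pairField A a) w k = advConst d •
      (dotC (k - A) a • leray k (w (k - A)) + dotC (k + A) (star a) • leray k (w (k + A))) := by
  funext i
  have hmode : ∀ (K : Fin d → ℤ) (u : Fin d → ℂ),
      HasSum (fun h => dotC (k - h) ((Pi.single K u : Coeff d) h) * leray k (w (k - h)) i)
        (dotC (k - K) u * leray k (w (k - K)) i) := by
    intro K u
    convert hasSum_pi_single K _ using 1
    funext h
    exact Pi.apply_single (fun h u => dotC (k - h) u * leray k (w (k - h)) i)
      (fun h => by simp [dotC_zero_right]) K u h
  have hsum := (hmode A a).add (hmode (-A) (star a))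
  simp only [← add_mul, ← dotC_add_right, sub_neg_eq_add] at hsum
  simp only [Pcoef, Pi.smul_apply, Pi.add_apply, smul_eq_mul]
  rw [← hsum.tsum_eq]
  rfl

lemma single_apply_sub (K A k : Fin d → ℤ) (u : Fin d → ℂ) :
    (Pi.single K u : Coeff d) (k - A) = (Pi.single (A + K) u : Coeff d) k := by
  simp only [Pi.single_apply, sub_eq_iff_eq_add']

lemma single_apply_add (K A k : Fin d → ℤ) (u : Fin d → ℂ) :
    (Pi.single K u : Coeff d) (k + A) = (Pi.single (K - A) u : Coeff d) k := by
  simp only [Pi.single_apply, eq_sub_iff_add_eq]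

theorem Pcoef_pairField_pairField (A B : Fin d → ℤ) (a b : Fin d → ℂ) :
    Pcoef (pairField A a) (pairField B b) = fun k =>
      pairField (A + B) (advConst d • dotC B a • leray (A + B) b) k +
        pairField (A - B) (advConst d • dotC (-B) a • leray (A - B) (star b)) k := by
  funext k
  let F₁ : (Fin d → ℤ) → (Fin d → ℂ) → Fin d → ℂ := fun q u =>
    advConst d • dotC (q - A) a • leray q u
  let F₂ : (Fin d → ℤ) → (Fin d → ℂ) → Fin d → ℂ := fun q u =>
    advConst d • dotC (q + A) (star a) • leray q u
  have hF₁ : ∀ q, F₁ q 0 = 0 := fun q => by simp [F₁, leray_zero]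
  have hF₂ : ∀ q, F₂ q 0 = 0 := fun q => by simp [F₂, leray_zero]
  have hF₁_add : ∀ q u u', F₁ q (u + u') = F₁ q u + F₁ q u' := fun q u u' => by
    simp only [F₁, leray_add, smul_add]
  have hF₂_add : ∀ q u u', F₂ q (u + u') = F₂ q u + F₂ q u' := fun q u u' => by
    simp only [F₂, leray_add, smul_add]
  calc Pcoef (pairField A a) (pairField B b) k
      = F₁ k (pairField B b (k - A)) + F₂ k (pairField B b (k + A)) := by
        rw [Pcoef_pairField_left, smul_add]
    _ = (Pi.single (A + B) (F₁ (A + B) b) : Coeff d) k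
          + (Pi.single (A - B) (F₁ (A - B) (star b)) : Coeff d) k
          + ((Pi.single (B - A) (F₂ (B - A) b) : Coeff d) k
          + (Pi.single (-B - A) (F₂ (-B - A) (star b)) : Coeff d) k) := by
        simp only [pairField, single_apply_sub, single_apply_add, hF₁_add, hF₂_add,
          Pi.apply_single F₁ hF₁, Pi.apply_single F₂ hF₂, ← sub_eq_add_neg]
    _ = _ := by
        have h₁ : F₁ (A + B) b = advConst d • dotC B a • leray (A + B) b := by
          simp [F₁]
        have h₂ : F₁ (A - B) (star b) = advConst d • dotC (-B) a • leray (A - B) (star b) := by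
          simp [F₁]
        rw [show -B - A = -(A + B) by abel, show B - A = -(A - B) by abel]
        -- the modes at `-(A ± B)` are conjugate to those at `A ± B` as `advConst d` is imaginary
        have h₃ : F₂ (-(A - B)) b = star (advConst d • dotC (-B) a • leray (A - B) (star b)) := by
          simp only [F₂]
          rw [leray_neg, show -(A - B) + A = B by abel]
          simp [star_advConst, star_dotC, star_leray, dotC_neg_left]
        have h₄ : F₂ (-(A + B)) (star b) = star (advConst d • dotC B a • leray (A + B) b) := by
          simp only [F₂]
          rw [leray_neg, show -(A + B) + A = -B by abel]
          simp [star_advConst, star_dotC, star_leray, dotC_neg_left]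
        rw [h₁, h₂, h₃, h₄]
        simp only [pairField]
        abel

theorem sobNorm_Pcoef_pairField {A B : Fin d → ℤ} {a b : Fin d → ℂ} (hA : A ≠ 0) (hB : B ≠ 0)
    (hAB : A + B ≠ 0) (hAB' : A - B ≠ 0) (hAb : dotC A b = 0) (hBb : dotC B b = 0) (m : ℝ) :
    sobNorm m (Pcoef (pairField A a) (pairField B b)) =
      √2 * ‖advConst d‖ * ‖dotC B a‖ * cNorm b *
        √(latNorm (A + B) ^ (2 * m) + latNorm (A - B) ^ (2 * m)) := by
  set C := ‖advConst d‖ * ‖dotC B a‖ * cNorm b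
  have hC : 0 ≤ C := mul_nonneg (by positivity) (cNorm_nonneg b)
  have hx : cNorm (advConst d • dotC B a • leray (A + B) b) = C := by
    rw [cNorm_smul, cNorm_smul, leray_of_dotC_eq_zero (by rw [dotC_add_left, hAb, hBb, add_zero]),
      ← mul_assoc]
  have hy : cNorm (advConst d • dotC (-B) a • leray (A - B) (star b)) = C := by
    have hABb : dotC (A - B) (star b) = 0 := by
      rw [sub_eq_add_neg, dotC_add_left, dotC_neg_left, ← star_dotC, ← star_dotC, hAb, hBb]
      simp
    rw [cNorm_smul, cNorm_smul, leray_of_dotC_eq_zero hABb, cNorm_star, dotC_neg_left, norm_neg,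
      ← mul_assoc]
  have hdisj := pairField_disjoint (K := A + B) (K' := A - B)
    (fun h => hB (self_eq_neg.mp (by linear_combination h)))
    (fun h => hA (self_eq_neg.mp (by linear_combination h)))
    (advConst d • dotC B a • leray (A + B) b) (advConst d • dotC (-B) a • leray (A - B) (star b))
  have hsq : sobNorm m (Pcoef (pairField A a) (pairField B b)) ^ 2 =
      (√2 * C) ^ 2 * ((latNorm (A + B) ^ m) ^ 2 + (latNorm (A - B) ^ m) ^ 2) := by
    rw [Pcoef_pairField_pairField]
    refine (sobNorm_add_sq inHm_pairField inHm_pairField hdisj).trans ?_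
    rw [sobNorm_pairField hAB, sobNorm_pairField hAB', hx, hy]
    ring
  rw [← Real.sqrt_sq (sobNorm_nonneg m _), hsq, Real.sqrt_mul (sq_nonneg _),
    Real.sqrt_sq (by positivity), latNorm_rpow_two_mul, latNorm_rpow_two_mul]
  simp only [C, mul_assoc]

theorem le_of_tameIneq_pairField {p n K : ℝ} (hK : tameIneq d p n K) {A B : Fin d → ℤ}
    {a b : Fin d → ℂ} (hA : A ≠ 0) (hB : B ≠ 0) (hAB : A + B ≠ 0) (hAB' : A - B ≠ 0)
    (hAa : dotC A a = 0) (hAb : dotC A b = 0) (hBb : dotC B b = 0) :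
    √2 * ‖advConst d‖ * ‖dotC B a‖ * cNorm b *
        √(latNorm (A + B) ^ (2 * p) + latNorm (A - B) ^ (2 * p)) ≤
      K * cNorm a * cNorm b *
        (latNorm A ^ p * latNorm B ^ (n + 1) + latNorm A ^ n * latNorm B ^ (p + 1)) := by
  have h := hK _ _ (divFree_pairField hAa) (divFree_pairField hBb) (meanZero_pairField hA)
    (meanZero_pairField hB) realField_pairField realField_pairField inHm_pairField inHm_pairField
  rw [sobNorm_Pcoef_pairField hA hB hAB hAB' hAb hBb, sobNorm_pairField hA, sobNorm_pairField hA,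
    sobNorm_pairField hB, sobNorm_pairField hB] at h
  have h2 : √2 * √2 = 2 := Real.mul_self_sqrt zero_le_two
  linear_combination h + (K / 2 * (cNorm a * cNorm b *
    (latNorm A ^ p * latNorm B ^ (n + 1) + latNorm A ^ n * latNorm B ^ (p + 1)))) * h2

theorem le_of_tameIneq_trial {p n K : ℝ} (hK : tameIneq d p n K) {i₀ i₁ i₂ : Fin d}
    (h₁₀ : i₁ ≠ i₀) (h₂₀ : i₂ ≠ i₀) (h₂₁ : i₂ ≠ i₁) {ℓ : ℕ} (hℓ : 1 ≤ ℓ) :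
    √2 * ((2 * Real.pi) ^ ((d : ℝ) / 2))⁻¹ * √(1 + (1 + 4 * (ℓ : ℝ) ^ 2) ^ p) ≤
      K * ((ℓ : ℝ) ^ p * √(1 + (ℓ : ℝ) ^ 2) ^ (n + 1) + (ℓ : ℝ) ^ n * √(1 + (ℓ : ℝ) ^ 2) ^ (p + 1)) := by
  let A : Fin d → ℤ := Pi.single i₀ ℓ
  let B : Fin d → ℤ := Pi.single i₁ 1 + Pi.single i₀ ℓ
  have hA : latNorm A = ℓ := by simp [A, latNorm_single]
  have hB : latNorm B = √(1 + (ℓ : ℝ) ^ 2) := by simp [B, latNorm_single_add_single h₁₀]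
  have hAB : latNorm (A + B) = √(1 + 4 * (ℓ : ℝ) ^ 2) := by
    rw [show A + B = Pi.single i₁ 1 + Pi.single i₀ (2 * ℓ : ℤ) by
        simp only [A, B]; rw [two_mul, Pi.single_add]; abel,
      latNorm_single_add_single h₁₀]
    push_cast
    ring_nf
  have hAB' : latNorm (A - B) = 1 := by
    rw [show A - B = -Pi.single i₁ 1 by simp only [A, B]; abel, latNorm_neg, latNorm_single]
    simp
  have hℓ₀ : (0 : ℝ) < ℓ := by exact_mod_cast hℓ
  have key := le_of_tameIneq_pairField hK (a := Pi.single i₁ Complex.I)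
    (b := Pi.single i₂ Complex.I)
    (ne_zero_of_latNorm_ne_zero (by rw [hA]; positivity))
    (ne_zero_of_latNorm_ne_zero (by rw [hB]; positivity))
    (ne_zero_of_latNorm_ne_zero (by rw [hAB]; positivity))
    (ne_zero_of_latNorm_ne_zero (by rw [hAB']; positivity))
    (by simp [A, dotC_single, h₁₀]) (by simp [A, dotC_single, h₂₀])
    (by simp [B, dotC_single, h₂₀, h₂₁])
  rw [hA, hB, hAB, hAB', norm_advConst, dotC_single, cNorm_single, cNorm_single,
    ← Real.rpow_div_two_eq_sqrt _ (by positivity), mul_div_cancel_left₀ p two_ne_zero] at key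
  simpa [B, h₁₀, add_comm _ (1 : ℝ)] using key

theorem lower_bound_trial_ell_general (d : ℕ) (hd : 3 ≤ d) (p n : ℝ) (ℓ : ℕ) (hℓ : 1 ≤ ℓ) :
    ∀ K : ℝ, tameIneq d p n K →
      Real.sqrt 2 / (2 * Real.pi) ^ ((d : ℝ) / 2) *
          Real.sqrt (1 + (1 + 4 * (ℓ : ℝ) ^ 2) ^ p) /
        ((ℓ : ℝ) ^ p * (1 + (ℓ : ℝ) ^ 2) ^ ((n + 1) / 2) +
          (ℓ : ℝ) ^ n * (1 + (ℓ : ℝ) ^ 2) ^ ((p + 1) / 2)) ≤ K := by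
  intro K hK
  have key := le_of_tameIneq_trial hK (i₀ := ⟨0, by omega⟩) (i₁ := ⟨1, by omega⟩)
    (i₂ := ⟨2, by omega⟩) (by simp) (by simp) (by simp) hℓ
  have hℓ₀ : (0 : ℝ) < ℓ := by exact_mod_cast hℓ
  have hD : 0 < (ℓ : ℝ) ^ p * (1 + (ℓ : ℝ) ^ 2) ^ ((n + 1) / 2) +
      (ℓ : ℝ) ^ n * (1 + (ℓ : ℝ) ^ 2) ^ ((p + 1) / 2) := by
    have := Real.rpow_pos_of_pos hℓ₀ p
    have := Real.rpow_pos_of_pos hℓ₀ n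
    positivity
  rw [div_le_iff₀ hD, Real.rpow_div_two_eq_sqrt (n + 1) (by positivity),
    Real.rpow_div_two_eq_sqrt (p + 1) (by positivity), div_eq_mul_inv]
  exact key

/-- Let `d ≥ 3`, real `p ≥ n > d/2`, and `ℓ ∈ {1,2,3,...}`. Every constant
`K` fulfilling the tame inequality
`‖P(v,w)‖_p ≤ (K/2)(‖v‖_p ‖w‖_{n+1} + ‖v‖_n ‖w‖_{p+1})` satisfies
`K ≥ (√2/(2π)^{d/2}) √(1+(1+4ℓ²)^p) / (ℓ^p (1+ℓ²)^{(n+1)/2} + ℓ^n (1+ℓ²)^{(p+1)/2})`;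
in particular this is a lower bound for the sharp constant `K_{pn}`. -/
theorem lower_bound_trial_ell (d : ℕ) (hd : 3 ≤ d) (p n : ℝ) (hpn : n ≤ p)
    (hn : (d : ℝ) / 2 < n) (ℓ : ℕ) (hℓ : 1 ≤ ℓ) :
    ∀ K : ℝ, tameIneq d p n K →
      Real.sqrt 2 / (2 * Real.pi) ^ ((d : ℝ) / 2) *
          Real.sqrt (1 + (1 + 4 * (ℓ : ℝ) ^ 2) ^ p) /
        ((ℓ : ℝ) ^ p * (1 + (ℓ : ℝ) ^ 2) ^ ((n + 1) / 2) +
          (ℓ : ℝ) ^ n * (1 + (ℓ : ℝ) ^ 2) ^ ((p + 1) / 2)) ≤ K :=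
  lower_bound_trial_ell_general d hd p n ℓ hℓ
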